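/- For every infinite binary word x, the following are equivalent: (i) 1·0·μ(x) is overlap-free and 0·μ(x) begins with 00; (ii) 1·x is overlap-free and x begins with 0. -/

import Mathlib

/-!
Since `μ(1·x) = 1 0 μ(x)` and `0·μ(x)` begins with `00` exactly when `x` begins with `0`, the
theorem reduces to the fact that `μ` preserves and reflects overlap-freeness. An overlap of
period `p` in `y` becomes one of period `2p` in `μ(y)`. Conversely, an overlap of even period in
`μ(y)` is the image of one in `y`; one of period `1` cannot occur, since `μ(y)` is a sequence of
complementary blocks `a (1 - a)`; and one of odd period `p ≥ 3` matches adjacent letters across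
block boundaries with letters inside blocks, which forces a factor `aaa` in `y`.
-/

/-- An overlap: a word of the form a x a x a, with `a` a single letter. -/
def Overlap (w : List (Fin 2)) : Prop :=
  ∃ (a : Fin 2) (x : List (Fin 2)), w = [a] ++ x ++ [a] ++ x ++ [a]

/-- `w` occurs as a (contiguous) factor of the infinite word `x`. -/
def FactorOf (w : List (Fin 2)) (x : ℕ → Fin 2) : Prop :=
  ∃ i, w = (List.range w.length).map (fun j => x (i + j))

/-- An infinite binary word is overlap-free if no finite factor is an overlap. -/
def OverlapFree (x : ℕ → Fin 2) : Prop :=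
  ∀ w, FactorOf w x → ¬ Overlap w

/-- The Thue–Morse morphism applied to an infinite word. -/
def mu (x : ℕ → Fin 2) : ℕ → Fin 2 :=
  fun n => if n % 2 = 0 then x (n / 2) else 1 - x (n / 2)

/-- Prepend a finite word to an infinite word. -/
def prepend (p : List (Fin 2)) (w : ℕ → Fin 2) : ℕ → Fin 2 :=
  fun n => if h : n < p.length then p.get ⟨n, h⟩ else w (n - p.length)

/-- `x` begins with the finite word `p`. -/
def BeginsWith (x : ℕ → Fin 2) (p : List (Fin 2)) : Prop :=
  ∀ i < p.length, x i = p.getD i 0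

lemma fin_two_ne_one_sub (a : Fin 2) : a ≠ 1 - a := by
  fin_cases a <;> decide

lemma fin_two_one_sub_ne_iff {a b : Fin 2} : 1 - a ≠ b ↔ a = b := by
  fin_cases a <;> fin_cases b <;> decide

section Mu

variable (y : ℕ → Fin 2)

@[simp]
lemma mu_two_mul (k : ℕ) : mu y (2 * k) = y k := by
  simp [mu]

@[simp]
lemma mu_two_mul_add_one (k : ℕ) : mu y (2 * k + 1) = 1 - y k := by
  simp [mu, Nat.add_mod, Nat.add_div]

lemma mu_zero : mu y 0 = y 0 := mu_two_mul y 0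

lemma mu_eq_mu_iff {n m : ℕ} (h : n % 2 = m % 2) : mu y n = mu y m ↔ y (n / 2) = y (m / 2) := by
  unfold mu
  rw [h]
  split_ifs
  · rfl
  · exact sub_right_inj

lemma mu_two_mul_ne_succ (k : ℕ) : mu y (2 * k) ≠ mu y (2 * k + 1) := by
  simpa using fin_two_ne_one_sub (y k)

lemma mu_two_mul_add_one_ne_succ_iff (k : ℕ) :
    mu y (2 * k + 1) ≠ mu y (2 * k + 2) ↔ y k = y (k + 1) := by
  rw [show 2 * k + 2 = 2 * (k + 1) by ring, mu_two_mul, mu_two_mul_add_one]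
  exact fin_two_one_sub_ne_iff

end Mu

lemma prepend_pair_mu (a : Fin 2) (y : ℕ → Fin 2) :
    prepend [a, 1 - a] (mu y) = mu (prepend [a] y) := by
  funext n
  rcases n with _ | _ | m
  · simp [prepend, mu]
  · simp [prepend, mu]
  · have hmod : (m + 1 + 1) % 2 = m % 2 := by omega
    have hdiv : (m + 1 + 1) / 2 - 1 = m / 2 := by omega
    simp [prepend, mu, hmod, hdiv]

lemma beginsWith_singleton {z : ℕ → Fin 2} {b : Fin 2} : BeginsWith z [b] ↔ z 0 = b := by
  simp [BeginsWith]

lemma beginsWith_prepend_singleton_cons {z : ℕ → Fin 2} {a : Fin 2} {p : List (Fin 2)} :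
    BeginsWith (prepend [a] z) (a :: p) ↔ BeginsWith z p := by
  constructor
  · intro h i hi
    simpa [prepend] using h (i + 1) (by simpa using hi)
  · rintro h (_ | i) hi
    · simp [prepend]
    · simpa [prepend] using h i (by simpa using hi)

def factorAt (y : ℕ → Fin 2) (i L : ℕ) : List (Fin 2) :=
  (List.range L).map fun j => y (i + j)

section Factor

variable (y : ℕ → Fin 2)

lemma length_factorAt (i L : ℕ) : (factorAt y i L).length = L := by
  simp [factorAt]

lemma factorOf_factorAt (i L : ℕ) : FactorOf (factorAt y i L) y :=
  ⟨i, by rw [length_factorAt]; rfl⟩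

lemma factorAt_add (i m n : ℕ) :
    factorAt y i (m + n) = factorAt y i m ++ factorAt y (i + m) n := by
  simp only [factorAt, List.range_add, List.map_append, List.map_map]
  congr 2
  funext j
  simp [Nat.add_assoc]

lemma factorAt_one (i : ℕ) : factorAt y i 1 = [y i] := by
  simp [factorAt]

lemma factorAt_congr {i i' : ℕ} (L : ℕ) (h : ∀ j < L, y (i + j) = y (i' + j)) :
    factorAt y i L = factorAt y i' L :=
  List.map_congr_left fun j hj => h j (List.mem_range.mp hj)

end Factor

/-- `y` has a factor of length `2p + 1` and period `p > 0`, i.e. an overlap `a x a x a` with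
`|a x| = p`. -/
def HasOverlap (y : ℕ → Fin 2) : Prop :=
  ∃ i p, 0 < p ∧ ∀ j ≤ p, y (i + j) = y (i + j + p)

lemma HasOverlap.not_overlapFree {y : ℕ → Fin 2} (h : HasOverlap y) : ¬ OverlapFree y := by
  obtain ⟨i, p, hp, hper⟩ := h
  have h0 : y (i + p) = y i := by simpa using (hper 0 (Nat.zero_le p)).symm
  have h2p : y (i + 2 * p) = y i := by
    rw [two_mul, ← add_assoc, ← hper p le_rfl, h0]
  have hx : factorAt y (i + p + 1) (p - 1) = factorAt y (i + 1) (p - 1) :=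
    factorAt_congr y _ fun j hj => by
      simpa [add_comm, add_left_comm, add_assoc] using (hper (1 + j) (by omega)).symm
  intro hfree
  refine hfree (factorAt y i (2 * p + 1)) (factorOf_factorAt y i _)
    ⟨y i, factorAt y (i + 1) (p - 1), ?_⟩
  rw [show 2 * p + 1 = 1 + (p - 1) + 1 + (p - 1) + 1 by omega]
  simp only [factorAt_add, factorAt_one]
  rw [show i + (1 + (p - 1)) = i + p by omega, show i + (1 + (p - 1) + 1) = i + p + 1 by omega,
    show i + (1 + (p - 1) + 1 + (p - 1)) = i + 2 * p by omega, h0, h2p, hx]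

lemma Overlap.hasOverlap_of_factorOf {w : List (Fin 2)} {y : ℕ → Fin 2} (ho : Overlap w)
    (hf : FactorOf w y) : HasOverlap y := by
  obtain ⟨a, x, rfl⟩ := ho
  obtain ⟨i, hfac⟩ := hf
  generalize hw : [a] ++ x ++ [a] ++ x ++ [a] = w at hfac
  have hget : ∀ j < w.length, w[j]? = some (y (i + j)) := fun j hj => by
    rw [hfac, List.getElem?_map, List.getElem?_range hj]
    rfl
  have hlen : w.length = 2 * (x.length + 1) + 1 := by rw [← hw]; simp; omega
  refine ⟨i, x.length + 1, Nat.succ_pos _, fun j hj => Option.some.inj ?_⟩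
  -- `w` is `a x` followed by `a x a`, and also `a x a` followed by `x a`
  have hleft : w[j]? = (a :: x ++ [a])[j]? := by
    rw [← hw, show [a] ++ x ++ [a] ++ x ++ [a] = (a :: x ++ [a]) ++ (x ++ [a]) by simp,
      List.getElem?_append_left (by simp; omega)]
  have hright : w[j + (x.length + 1)]? = (a :: x ++ [a])[j]? := by
    rw [← hw, show [a] ++ x ++ [a] ++ x ++ [a] = (a :: x) ++ (a :: x ++ [a]) by simp,
      List.getElem?_append_right (by simp)]
    simp
  rw [← hget j (by omega), add_assoc, ← hget _ (by omega), hleft, hright]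

lemma overlapFree_iff_not_hasOverlap {y : ℕ → Fin 2} : OverlapFree y ↔ ¬ HasOverlap y :=
  ⟨fun hfree h => h.not_overlapFree hfree, fun h _ hf ho => h (ho.hasOverlap_of_factorOf hf)⟩

protected lemma HasOverlap.mu {y : ℕ → Fin 2} (h : HasOverlap y) : HasOverlap (mu y) := by
  obtain ⟨i, p, hp, hper⟩ := h
  refine ⟨2 * i, 2 * p, by omega, fun j hj => (mu_eq_mu_iff y (by omega)).2 ?_⟩
  rw [show (2 * i + j) / 2 = i + j / 2 by omega,
    show (2 * i + j + 2 * p) / 2 = i + j / 2 + p by omega]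
  exact hper (j / 2) (by omega)

/-- Of two matching pairs of adjacent letters of `mu y` an odd distance apart, one is a
complementary pair `y m, 1 - y m`, so the other one, which straddles two blocks, yields a square
`y k = y (k + 1)`. -/
lemma eq_succ_of_mu_eq_shift_odd {y : ℕ → Fin 2} {n q k : ℕ} (hq : Odd q)
    (hk : 2 * k + 1 = n ∨ 2 * k + 1 = n + q) (h : ∀ j ≤ 1, mu y (n + j) = mu y (n + j + q)) :
    y k = y (k + 1) := by
  have h₀ : mu y n = mu y (n + q) := by simpa using h 0 zero_le_one
  have h₁ : mu y (n + 1) = mu y (n + 1 + q) := h 1 le_rfl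
  rw [← mu_two_mul_add_one_ne_succ_iff]
  rcases hk with hk | hk
  · obtain ⟨m, hm⟩ : ∃ m, n + q = 2 * m := by rcases hq with ⟨r, rfl⟩; exact ⟨k + r + 1, by omega⟩
    rw [hk, show 2 * k + 2 = n + 1 by omega, h₀, h₁, show n + 1 + q = n + q + 1 by omega, hm]
    exact mu_two_mul_ne_succ y m
  · obtain ⟨m, hm⟩ : ∃ m, n = 2 * m := by rcases hq with ⟨r, rfl⟩; exact ⟨k - r, by omega⟩
    rw [hk, show 2 * k + 2 = n + 1 + q by omega, ← h₀, ← h₁, hm]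
    exact mu_two_mul_ne_succ y m

lemma HasOverlap.of_mu {y : ℕ → Fin 2} (h : HasOverlap (mu y)) : HasOverlap y := by
  obtain ⟨i, p, hp, hper⟩ := h
  rcases Nat.even_or_odd' p with ⟨q, rfl | rfl⟩
  · refine ⟨i / 2, q, by omega, fun t ht => ?_⟩
    have h := (mu_eq_mu_iff y (n := i + 2 * t) (m := i + 2 * t + 2 * q) (by omega)).1
      (hper (2 * t) (by omega))
    rwa [show (i + 2 * t) / 2 = i / 2 + t by omega,
      show (i + 2 * t + 2 * q) / 2 = i / 2 + t + q by omega] at h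
  obtain rfl | hq := Nat.eq_zero_or_pos q
  · exfalso
    rcases Nat.even_or_odd' i with ⟨k, rfl | rfl⟩
    · exact mu_two_mul_ne_succ y k (hper 0 zero_le_one)
    · exact mu_two_mul_ne_succ y (k + 1) (by simpa [mul_add, add_assoc] using hper 1 le_rfl)
  · obtain ⟨k, hk⟩ : ∃ k, 2 * k + 1 = i ∨ 2 * k + 1 = i + (2 * q + 1) := by
      rcases Nat.even_or_odd' i with ⟨k, rfl | rfl⟩
      · exact ⟨k + q, Or.inr (by omega)⟩
      · exact ⟨k, Or.inl rfl⟩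
    have hodd : Odd (2 * q + 1) := odd_two_mul_add_one q
    have e₀ := eq_succ_of_mu_eq_shift_odd hodd hk fun j hj => hper j (by omega)
    have e₁ := eq_succ_of_mu_eq_shift_odd hodd (n := i + 2) (k := k + 1) (by omega)
      fun j hj => by simpa [add_assoc] using hper (2 + j) (by omega)
    refine ⟨k, 1, one_pos, fun j hj => ?_⟩
    interval_cases j
    · simpa using e₀
    · simpa using e₁

lemma overlapFree_mu_iff {y : ℕ → Fin 2} : OverlapFree (mu y) ↔ OverlapFree y := by
  simp only [overlapFree_iff_not_hasOverlap]
  exact not_congr ⟨HasOverlap.of_mu, HasOverlap.mu⟩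

theorem onezero_mu_begins_00_iff (x : ℕ → Fin 2) :
    (OverlapFree (prepend [1, 0] (mu x)) ∧ BeginsWith (prepend [0] (mu x)) [0, 0]) ↔
      (OverlapFree (prepend [1] x) ∧ BeginsWith x [0]) := by
  have hprefix : prepend [1, 0] (mu x) = mu (prepend [1] x) := prepend_pair_mu 1 x
  rw [hprefix, overlapFree_mu_iff, beginsWith_prepend_singleton_cons, beginsWith_singleton,
    beginsWith_singleton, mu_zero]
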